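/- Let k ≥ 0 and t ≥ 0 be natural numbers with 2t < 2^k (equivalently, t < 2^{k−1} when k ≥ 1, and t = 0 when k = 0), and set s = 2^{k+1} − (2t + 1), an odd number with ⌊log₂ s⌋ = k. Then for every m ≥ 1, the equality c(2m + s) + c(2m) + s = c(4m + s) holds if and only if m = 2^k · p for some p ≥ 1. -/
import Mathlib

/-- The Colless index of the maximally balanced bifurcating tree with `n` leaves:
`c 1 = 0` and `c n = c ⌈n/2⌉ + c ⌊n/2⌋ + (⌈n/2⌉ - ⌊n/2⌋)` for `n ≥ 2`. -/
def c : ℕ → ℕ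
  | 0 => 0
  | 1 => 0
  | n + 2 => c ((n + 3) / 2) + c ((n + 2) / 2) + ((n + 3) / 2 - (n + 2) / 2)
decreasing_by all_goals omega

lemma c_two_mul (x : ℕ) : c (2 * x) = 2 * c x := by
  match x with
  | 0 => simp [c]
  | x + 1 =>
    show c (2 * x + 2) = 2 * c (x + 1)
    rw [c]
    have h1 : (2 * x + 3) / 2 = x + 1 := by omega
    have h2 : (2 * x + 2) / 2 = x + 1 := by omega
    rw [h1, h2]
    omega

lemma c_odd (x : ℕ) (hx : 1 ≤ x) : c (2 * x + 1) = c (x + 1) + c x + 1 := by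
  obtain ⟨y, rfl⟩ : ∃ y, x = y + 1 := ⟨x - 1, by omega⟩
  show c (2 * y + 3) = c (y + 2) + c (y + 1) + 1
  rw [show 2 * y + 3 = (2 * y + 1) + 2 by ring, c]
  have h1 : (2 * y + 1 + 3) / 2 = y + 2 := by omega
  have h2 : (2 * y + 1 + 2) / 2 = y + 1 := by omega
  rw [h1, h2]
  omega

lemma c_succ_le (n : ℕ) (hn : 1 ≤ n) : (c (n + 1) : ℤ) ≤ (c n : ℤ) + n - 1 := by
  induction n using Nat.strong_induction_on with
  | _ n ih =>
  obtain ⟨M, rfl | rfl⟩ := Nat.even_or_odd' n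
  · -- n = 2M, M ≥ 1
    have hM : 1 ≤ M := by omega
    rw [c_odd M hM, c_two_mul]
    have := ih M (by omega) hM
    push_cast
    push_cast at this
    linarith [this, (by exact_mod_cast hM : (1:ℤ) ≤ M)]
  · rcases Nat.eq_zero_or_pos M with rfl | hM
    · have h2 : c 2 = 0 := by simp [c]
      have h1 : c 1 = 0 := by simp [c]
      norm_num [h2, h1]
    · rw [show 2 * M + 1 + 1 = 2 * (M + 1) by ring, c_two_mul, c_odd M hM]
      have := ih M (by omega) hM
      push_cast
      push_cast at this
      linarith [this, (by exact_mod_cast hM : (1:ℤ) ≤ M)]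

lemma c_succ_le' (n : ℕ) (hn : 3 ≤ n) : (c (n + 1) : ℤ) ≤ (c n : ℤ) + n - 2 := by
  obtain ⟨M, rfl | rfl⟩ := Nat.even_or_odd' n
  · have hM : 2 ≤ M := by omega
    rw [c_odd M (by omega), c_two_mul]
    have := c_succ_le M (by omega)
    push_cast
    linarith [this, (by exact_mod_cast hM : (2:ℤ) ≤ M)]
  · have hM : 1 ≤ M := by omega
    rw [show 2 * M + 1 + 1 = 2 * (M + 1) by ring, c_two_mul, c_odd M hM]
    have := c_succ_le M (by omega)
    push_cast
    linarith [this, (by exact_mod_cast hM : (1:ℤ) ≤ M)]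

lemma exists_lv (u : ℕ) (hu : 1 ≤ u) : ∃ e, u ≤ 2 ^ e ∧ 2 ^ e < 2 * u := by
  rcases eq_or_lt_of_le hu with h | h
  · exact ⟨0, by omega, by omega⟩
  · refine ⟨Nat.clog 2 u, Nat.le_pow_clog (by norm_num) u, ?_⟩
    have h1 : 2 ^ (Nat.clog 2 u - 1) < u := Nat.pow_pred_clog_lt_self (by norm_num) h
    have h2 : 0 < Nat.clog 2 u := Nat.clog_pos (by norm_num) h
    have h3 : (2:ℕ) ^ Nat.clog 2 u = 2 * 2 ^ (Nat.clog 2 u - 1) := by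
      rw [← pow_succ']
      congr 1
      omega
    omega

lemma psi_le : ∀ N u m : ℕ, u + m ≤ N → (c (2 * m + u) : ℤ) ≤ (c (m + u) : ℤ) + c m + u := by
  intro N
  induction N with
  | zero =>
    intro u m h
    obtain rfl : u = 0 := by omega
    obtain rfl : m = 0 := by omega
    simp
  | succ N ih =>
    intro u m hN
    rcases Nat.lt_or_ge m 2 with hm | hm
    · interval_cases m
      · have h0 : c 0 = 0 := by simp [c]
        norm_num [h0]
      · have h1 : c 1 = 0 := by simp [c]
        rw [show 2 * 1 + u = (u + 1) + 1 by ring, show 1 + u = u + 1 by ring, h1]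
        have := c_succ_le (u + 1) (by omega)
        push_cast at this ⊢
        linarith
    rcases Nat.lt_or_ge u 2 with hu | hu
    · interval_cases u
      · rw [show 2 * m + 0 = 2 * m by ring, c_two_mul, show m + 0 = m by ring]
        push_cast
        linarith
      · rw [c_odd m (by omega)]
        push_cast
        linarith
    -- now m ≥ 2, u ≥ 2
    obtain ⟨f, rfl | rfl⟩ := Nat.even_or_odd' u
    · obtain ⟨M, rfl | rfl⟩ := Nat.even_or_odd' m
      · -- u = 2f, m = 2M
        have hf : 1 ≤ f := by omega
        have hM : 1 ≤ M := by omega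
        rw [show 2 * (2 * M) + 2 * f = 2 * (2 * M + f) by ring, c_two_mul,
            show 2 * M + 2 * f = 2 * (M + f) by ring, c_two_mul, c_two_mul]
        have I1 := ih f M (by omega)
        push_cast at I1 ⊢
        linarith
      · -- u = 2f (f ≥ 1), m = 2M+1 (M ≥ 1)
        have hf : 1 ≤ f := by omega
        have hM : 1 ≤ M := by omega
        obtain ⟨g, rfl⟩ : ∃ g, f = g + 1 := ⟨f - 1, by omega⟩
        rw [show 2 * (2 * M + 1) + 2 * (g + 1) = 2 * (2 * M + g + 2) by ring, c_two_mul,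
            show 2 * M + 1 + 2 * (g + 1) = 2 * (M + g + 1) + 1 by ring,
            c_odd (M + g + 1) (by omega), c_odd M hM]
        have I1 := ih g (M + 1) (by omega)
        have I2 := ih (g + 2) M (by omega)
        rw [show 2 * (M + 1) + g = 2 * M + g + 2 by ring,
            show M + 1 + g = M + g + 1 by ring] at I1
        rw [show 2 * M + (g + 2) = 2 * M + g + 2 by ring,
            show M + (g + 2) = M + g + 2 by ring] at I2
        rw [show M + g + 1 + 1 = M + g + 2 by ring]
        push_cast at I1 I2 ⊢
        linarith
    · obtain ⟨M, rfl | rfl⟩ := Nat.even_or_odd' m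
      · -- u = 2f+1, m = 2M
        have hf : 1 ≤ f := by omega
        have hM : 1 ≤ M := by omega
        rw [show 2 * (2 * M) + (2 * f + 1) = 2 * (2 * M + f) + 1 by ring,
            c_odd (2 * M + f) (by omega),
            show 2 * M + (2 * f + 1) = 2 * (M + f) + 1 by ring,
            c_odd (M + f) (by omega), c_two_mul]
        have I1 := ih f M (by omega)
        have I2 := ih (f + 1) M (by omega)
        rw [show 2 * M + (f + 1) = 2 * M + f + 1 by ring,
            show M + (f + 1) = M + f + 1 by ring] at I2
        push_cast at I1 I2 ⊢
        linarith
      · -- u = 2f+1, m = 2M+1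
        have hf : 1 ≤ f := by omega
        have hM : 1 ≤ M := by omega
        rw [show 2 * (2 * M + 1) + (2 * f + 1) = 2 * (2 * M + f + 1) + 1 by ring,
            c_odd (2 * M + f + 1) (by omega),
            show 2 * M + 1 + (2 * f + 1) = 2 * (M + f + 1) by ring,
            c_two_mul, c_odd M hM]
        have I1 := ih f (M + 1) (by omega)
        have I2 := ih (f + 1) M (by omega)
        rw [show 2 * (M + 1) + f = 2 * M + f + 1 + 1 by ring,
            show M + 1 + f = M + f + 1 by ring] at I1
        rw [show 2 * M + (f + 1) = 2 * M + f + 1 by ring,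
            show M + (f + 1) = M + f + 1 by ring] at I2
        push_cast at I1 I2 ⊢
        linarith

lemma pow_two_le_of_le {a b : ℕ} (h : a ≤ b) : (2:ℕ) ^ a ≤ 2 ^ b :=
  Nat.pow_le_pow_right (by norm_num) h

lemma k_eq_one {k : ℕ} (hk : 1 ≤ k) (h : (2:ℕ) ^ (k - 1) ≤ 1) : k = 1 := by
  by_contra hc
  have : (2:ℕ) ^ 1 ≤ 2 ^ (k - 1) := pow_two_le_of_le (by omega)
  omega

lemma arith1 (k f M ef : ℕ) (hk : 1 ≤ k)
    (hf1 : 2 ^ (k - 1) ≤ f) (hf2 : f < 2 ^ k)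
    (hef1 : f ≤ 2 ^ ef) (hef2 : 2 ^ ef < 2 * f) :
    ((2 ^ ef ∣ M ∨ (2 ^ ef ∣ (M + f) ∧ 2 ^ (ef + 1) ≤ M + f)) ∧
     (2 ^ k ∣ M ∨ (2 ^ k ∣ (M + f + 1) ∧ 2 ^ (k + 1) ≤ M + f + 1))) ↔ 2 ^ k ∣ M := by
  have e1 : (2:ℕ) ^ k = 2 * 2 ^ (k - 1) := by rw [← pow_succ']; congr 1; omega
  have e2 : (2:ℕ) ^ (k + 1) = 2 * 2 ^ k := by rw [pow_succ]; ring
  have hef_le : ef ≤ k := by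
    by_contra hc
    have : (2:ℕ) ^ (k + 1) ≤ 2 ^ ef := pow_two_le_of_le (by omega)
    omega
  constructor
  · rintro ⟨hQf, hQg⟩
    rcases hQg with h | ⟨hd, -⟩
    · exact h
    · rcases hQf with h | ⟨h1, -⟩
      · rcases Nat.eq_or_lt_of_le hef_le with rfl | hlt
        · exact h
        · -- ef ≤ k - 1, so 2^ef = 2^(k-1) = f
          have hle : (2:ℕ) ^ ef ≤ 2 ^ (k - 1) := pow_two_le_of_le (by omega)
          have hfe : f = 2 ^ (k - 1) := by omega
          have hM' : (2:ℕ) ^ (k - 1) ∣ M := by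
            have : (2:ℕ) ^ ef = 2 ^ (k - 1) := by omega
            rwa [this] at h
          have hdd : (2:ℕ) ^ (k - 1) ∣ M + (f + 1) := by
            refine dvd_trans (pow_dvd_pow 2 (by omega : k - 1 ≤ k)) ?_
            rwa [show M + (f + 1) = M + f + 1 by ring]
          have h3 : (2:ℕ) ^ (k - 1) ∣ f + 1 := (Nat.dvd_add_right hM').mp hdd
          have h4 : (2:ℕ) ^ (k - 1) ≤ 1 := by
            have := Nat.dvd_sub h3 (by rw [hfe] : (2:ℕ) ^ (k - 1) ∣ f)
            have h1' : (2:ℕ) ^ (k - 1) ∣ 1 := by simpa [show f + 1 - f = 1 by omega] using this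
            exact Nat.le_of_dvd (by norm_num) h1'
          have hk1 : k = 1 := k_eq_one hk h4
          subst hk1
          have : f = 1 := by omega
          subst this
          norm_num at hd ⊢
          omega
      · -- h1 : 2^ef ∣ M + f, hd : 2^k ∣ M + f + 1
        have hdd : (2:ℕ) ^ ef ∣ M + f + 1 := dvd_trans (pow_dvd_pow 2 hef_le) hd
        have h4 : (2:ℕ) ^ ef = 1 := by
          have := Nat.dvd_sub hdd h1
          have h1' : (2:ℕ) ^ ef ∣ 1 := by simpa [show M + f + 1 - (M + f) = 1 by omega] using this
          exact Nat.dvd_one.mp h1'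
        have hf_eq : f = 1 := by omega
        have hk1 : k = 1 := k_eq_one hk (by omega)
        subst hk1; subst hf_eq
        norm_num at hd ⊢
        omega
  · intro h
    exact ⟨Or.inl (dvd_trans (pow_dvd_pow 2 hef_le) h), Or.inl h⟩

lemma arith2 (k f M ef : ℕ) (hk : 1 ≤ k) (hM : 1 ≤ M)
    (hf1 : 2 ^ (k - 1) ≤ f) (hf2 : f < 2 ^ k)
    (hef1 : f ≤ 2 ^ ef) (hef2 : 2 ^ ef < 2 * f) :
    ((2 ^ ef ∣ (M + 1) ∨ (2 ^ ef ∣ (M + f + 1) ∧ 2 ^ (ef + 1) ≤ M + f + 1)) ∧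
     (2 ^ k ∣ M ∨ (2 ^ k ∣ (M + f + 1) ∧ 2 ^ (k + 1) ≤ M + f + 1))) ↔
    (2 ^ k ∣ (M + f + 1) ∧ 2 ^ (k + 1) ≤ M + f + 1) := by
  have e1 : (2:ℕ) ^ k = 2 * 2 ^ (k - 1) := by rw [← pow_succ']; congr 1; omega
  have e2 : (2:ℕ) ^ (k + 1) = 2 * 2 ^ k := by rw [pow_succ]; ring
  have hef_le : ef ≤ k := by
    by_contra hc
    have : (2:ℕ) ^ (k + 1) ≤ 2 ^ ef := pow_two_le_of_le (by omega)
    omega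
  constructor
  · rintro ⟨hQf, hQg⟩
    rcases hQg with h | hgood
    · have hM2k : 2 ^ k ≤ M := Nat.le_of_dvd (by omega) h
      rcases hQf with h1 | ⟨h1, -⟩
      · -- 2^ef ∣ M+1 and 2^ef ∣ M (via k) ⇒ 2^ef = 1 ⇒ f=1, k=1
        have hM' : (2:ℕ) ^ ef ∣ M := dvd_trans (pow_dvd_pow 2 hef_le) h
        have h4 : (2:ℕ) ^ ef = 1 := by
          have := Nat.dvd_sub h1 hM'
          have h1' : (2:ℕ) ^ ef ∣ 1 := by simpa [show M + 1 - M = 1 by omega] using this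
          exact Nat.dvd_one.mp h1'
        have hf_eq : f = 1 := by omega
        have hk1 : k = 1 := k_eq_one hk (by omega)
        subst hk1; subst hf_eq
        norm_num at h ⊢
        omega
      · -- 2^ef ∣ M+1+f with 2^ef ∣ M ⇒ 2^ef ∣ f+1
        have hM' : (2:ℕ) ^ ef ∣ M := dvd_trans (pow_dvd_pow 2 hef_le) h
        have h3 : (2:ℕ) ^ ef ∣ f + 1 := by
          have := (Nat.dvd_add_right hM').mp (by rwa [show M + f + 1 = M + (f + 1) by ring] at h1)
          exact this
        rcases Nat.eq_or_lt_of_le hef_le with rfl | hlt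
        · -- ef = k : f + 1 = 2^ef
          have hle : 2 ^ ef ≤ f + 1 := Nat.le_of_dvd (by omega) h3
          have hfe : f + 1 = 2 ^ ef := by omega
          constructor
          · rw [show M + f + 1 = M + (f + 1) by ring, hfe]
            exact Nat.dvd_add h (dvd_refl _)
          · omega
        · -- ef ≤ k-1 ⇒ f = 2^(k-1) = 2^ef ⇒ 2^(k-1) ∣ 2^(k-1)+1 ⇒ k = 1
          have hle : (2:ℕ) ^ ef ≤ 2 ^ (k - 1) := pow_two_le_of_le (by omega)
          have hfe : f = 2 ^ (k - 1) := by omega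
          have hee : (2:ℕ) ^ ef = 2 ^ (k - 1) := by omega
          have h4 : (2:ℕ) ^ (k - 1) ≤ 1 := by
            have := Nat.dvd_sub (hee ▸ h3) (by rw [hfe] : (2:ℕ) ^ (k - 1) ∣ f)
            have h1' : (2:ℕ) ^ (k - 1) ∣ 1 := by simpa [show f + 1 - f = 1 by omega] using this
            exact Nat.le_of_dvd (by norm_num) h1'
          have hk1 : k = 1 := k_eq_one hk h4
          subst hk1
          have : f = 1 := by omega
          subst this
          norm_num at h ⊢
          omega
    · exact hgood
  · rintro ⟨hd, hsz⟩
    refine ⟨Or.inr ⟨?_, ?_⟩, Or.inr ⟨hd, hsz⟩⟩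
    · exact dvd_trans (pow_dvd_pow 2 hef_le) hd
    · have : (2:ℕ) ^ (ef + 1) ≤ 2 ^ (k + 1) := pow_two_le_of_le (by omega)
      omega

lemma psi_eq_iff : ∀ N u m e : ℕ, u + m ≤ N → 1 ≤ m → u ≤ 2 ^ e → 2 ^ e < 2 * u →
    (((c (2 * m + u) : ℤ) = c (m + u) + c m + u) ↔
      (2 ^ e ∣ m ∨ (2 ^ e ∣ (m + u) ∧ 2 ^ (e + 1) ≤ m + u))) := by
  intro N
  induction N with
  | zero =>
    intro u m e h hm hl1 hl2
    have : (0:ℕ) < 2 ^ e := pow_pos (by norm_num) e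
    omega
  | succ N ih =>
    intro u m e hN hm hl1 hl2
    have hpe : (0:ℕ) < 2 ^ e := pow_pos (by norm_num) e
    have hu1 : 1 ≤ u := by omega
    rcases Nat.lt_or_ge u 2 with hu | hu
    · -- u = 1
      obtain rfl : u = 1 := by omega
      constructor
      · intro _
        exact Or.inl (by
          have : e = 0 := by
            by_contra hc
            have : (2:ℕ) ^ 1 ≤ 2 ^ e := pow_two_le_of_le (by omega)
            omega
          rw [this]; simpa using one_dvd m)
      · intro _
        rw [c_odd m hm]
        push_cast
        ring
    have he1 : 1 ≤ e := by
      by_contra hc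
      have : (2:ℕ) ^ e ≤ 2 ^ 0 := pow_two_le_of_le (by omega)
      omega
    have he : (2:ℕ) ^ e = 2 * 2 ^ (e - 1) := by rw [← pow_succ']; congr 1; omega
    have hee : (2:ℕ) ^ (e + 1) = 2 * 2 ^ e := by rw [pow_succ]; ring
    have hee' : (2:ℕ) ^ (e - 1 + 1) = 2 ^ e := by congr 1; omega
    rcases Nat.lt_or_ge m 2 with hm2 | hm2
    · -- m = 1 : both sides false
      obtain rfl : m = 1 := by omega
      apply iff_of_false
      · intro h
        have h1 : c 1 = 0 := by simp [c]
        rw [show 2 * 1 + u = (u + 1) + 1 by ring, show 1 + u = u + 1 by ring, h1] at h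
        have := c_succ_le' (u + 1) (by omega)
        push_cast at h this
        linarith
      · rintro (h | ⟨-, h⟩)
        · have h2 : (2:ℕ) ^ e ≤ 1 := Nat.le_of_dvd one_pos h
          omega
        · omega
    -- m ≥ 2, u ≥ 2
    obtain ⟨f, rfl | rfl⟩ := Nat.even_or_odd' u
    · -- u = 2f even
      have hf : 1 ≤ f := by omega
      have hfl1 : f ≤ 2 ^ (e - 1) := by omega
      have hfl2 : 2 ^ (e - 1) < 2 * f := by omega
      obtain ⟨M, rfl | rfl⟩ := Nat.even_or_odd' m
      · -- m = 2M
        have hM : 1 ≤ M := by omega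
        have IH := ih f M (e - 1) (by omega) hM hfl1 hfl2
        rw [show 2 * (2 * M) + 2 * f = 2 * (2 * M + f) by ring, c_two_mul,
            show 2 * M + 2 * f = 2 * (M + f) by ring, c_two_mul, c_two_mul]
        constructor
        · intro h
          push_cast at h
          have h' := IH.mp (by linarith)
          rcases h' with h1 | ⟨h1, h2⟩
          · exact Or.inl (by rw [he]; exact mul_dvd_mul_left 2 h1)
          · refine Or.inr ⟨?_, ?_⟩
            · rw [he]; exact mul_dvd_mul_left 2 h1
            · omega
        · intro h
          have h' : 2 ^ (e - 1) ∣ M ∨ (2 ^ (e - 1) ∣ (M + f) ∧ 2 ^ (e - 1 + 1) ≤ M + f) := by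
            rcases h with h1 | ⟨h1, h2⟩
            · left
              rw [he] at h1
              exact (mul_dvd_mul_iff_left (two_ne_zero)).mp h1
            · right
              refine ⟨?_, by omega⟩
              rw [he] at h1
              exact (mul_dvd_mul_iff_left (two_ne_zero)).mp h1
          have := IH.mpr h'
          push_cast
          linarith
      · -- m = 2M+1 : both sides false
        have hM : 1 ≤ M := by omega
        obtain ⟨g, rfl⟩ : ∃ g, f = g + 1 := ⟨f - 1, by omega⟩
        apply iff_of_false
        · intro h
          rw [show 2 * (2 * M + 1) + 2 * (g + 1) = 2 * (2 * M + g + 2) by ring, c_two_mul,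
              show 2 * M + 1 + 2 * (g + 1) = 2 * (M + g + 1) + 1 by ring,
              c_odd (M + g + 1) (by omega), c_odd M hM] at h
          have I1 := psi_le (g + (M + 1)) g (M + 1) le_rfl
          have I2 := psi_le ((g + 2) + M) (g + 2) M le_rfl
          rw [show 2 * (M + 1) + g = 2 * M + g + 2 by ring,
              show M + 1 + g = M + g + 1 by ring] at I1
          rw [show 2 * M + (g + 2) = 2 * M + g + 2 by ring,
              show M + (g + 2) = M + g + 2 by ring] at I2
          rw [show M + g + 1 + 1 = M + g + 2 by ring] at h
          push_cast at h I1 I2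
          linarith
        · rintro (h | ⟨h, -⟩)
          · have h2 : (2:ℕ) ∣ 2 * M + 1 := dvd_trans (dvd_pow_self 2 (by omega : e ≠ 0)) h
            omega
          · have h2 : (2:ℕ) ∣ 2 * M + 1 + 2 * (g + 1) :=
              dvd_trans (dvd_pow_self 2 (by omega : e ≠ 0)) h
            omega
    · -- u = 2f+1 odd, u ≥ 3 so f ≥ 1, e ≥ 2
      have hf : 1 ≤ f := by omega
      have he2 : 2 ≤ e := by
        by_contra hc
        have : (2:ℕ) ^ e ≤ 2 ^ 1 := pow_two_le_of_le (by omega)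
        omega
      have hk : 1 ≤ e - 1 := by omega
      have ek2 : (2:ℕ) ^ (e - 1) = 2 * 2 ^ (e - 1 - 1) := by rw [← pow_succ']; congr 1; omega
      have hra : 2 ^ (e - 1 - 1) ≤ f := by omega
      have hrb : f < 2 ^ (e - 1) := by omega
      obtain ⟨ef, hef1, hef2⟩ := exists_lv f hf
      have hgl1 : f + 1 ≤ 2 ^ (e - 1) := by omega
      have hgl2 : 2 ^ (e - 1) < 2 * (f + 1) := by omega
      obtain ⟨M, rfl | rfl⟩ := Nat.even_or_odd' m
      · -- m = 2M
        have hM : 1 ≤ M := by omega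
        have IH1 := ih f M ef (by omega) hM hef1 hef2
        have IH2 := ih (f + 1) M (e - 1) (by omega) hM hgl1 hgl2
        rw [show 2 * M + (f + 1) = 2 * M + f + 1 by ring,
            show M + (f + 1) = M + f + 1 by ring] at IH2
        have hAr := arith1 (e - 1) f M ef hk hra hrb hef1 hef2
        have hb1 := psi_le (f + M) f M le_rfl
        have hb2 := psi_le ((f + 1) + M) (f + 1) M le_rfl
        rw [show 2 * M + (f + 1) = 2 * M + f + 1 by ring,
            show M + (f + 1) = M + f + 1 by ring] at hb2
        rw [show 2 * (2 * M) + (2 * f + 1) = 2 * (2 * M + f) + 1 by ring,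
            c_odd (2 * M + f) (by omega),
            show 2 * M + (2 * f + 1) = 2 * (M + f) + 1 by ring,
            c_odd (M + f) (by omega), c_two_mul]
        constructor
        · intro h
          push_cast at h hb1 hb2
          have r1 := IH1.mp (by push_cast; linarith)
          have r2 := IH2.mp (by push_cast; linarith)
          exact Or.inl (by rw [he]; exact mul_dvd_mul_left 2 (hAr.mp ⟨r1, r2⟩))
        · intro h
          have hM' : 2 ^ (e - 1) ∣ M := by
            rcases h with h1 | ⟨h1, -⟩
            · rw [he] at h1
              exact (mul_dvd_mul_iff_left (two_ne_zero)).mp h1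
            · exfalso
              have h2 : (2:ℕ) ∣ 2 * (M + f) + 1 :=
                dvd_trans (dvd_pow_self 2 (by omega : e ≠ 0)) h1
              omega
          obtain ⟨r1, r2⟩ := hAr.mpr hM'
          have q1 := IH1.mpr r1
          have q2 := IH2.mpr r2
          push_cast at q1 q2 ⊢
          linarith
      · -- m = 2M+1
        have hM : 1 ≤ M := by omega
        have IH1 := ih f (M + 1) ef (by omega) (by omega) hef1 hef2
        rw [show 2 * (M + 1) + f = 2 * M + f + 2 by ring,
            show M + 1 + f = M + f + 1 by ring] at IH1
        have IH2 := ih (f + 1) M (e - 1) (by omega) hM hgl1 hgl2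
        rw [show 2 * M + (f + 1) = 2 * M + f + 1 by ring,
            show M + (f + 1) = M + f + 1 by ring] at IH2
        have hAr := arith2 (e - 1) f M ef hk hM hra hrb hef1 hef2
        have hb1 := psi_le (f + (M + 1)) f (M + 1) le_rfl
        rw [show 2 * (M + 1) + f = 2 * M + f + 2 by ring,
            show M + 1 + f = M + f + 1 by ring] at hb1
        have hb2 := psi_le ((f + 1) + M) (f + 1) M le_rfl
        rw [show 2 * M + (f + 1) = 2 * M + f + 1 by ring,
            show M + (f + 1) = M + f + 1 by ring] at hb2
        rw [show 2 * (2 * M + 1) + (2 * f + 1) = 2 * (2 * M + f + 1) + 1 by ring,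
            c_odd (2 * M + f + 1) (by omega),
            show 2 * M + 1 + (2 * f + 1) = 2 * (M + f + 1) by ring,
            c_two_mul, c_odd M hM,
            show 2 * M + f + 1 + 1 = 2 * M + f + 2 by ring]
        constructor
        · intro h
          push_cast at h hb1 hb2
          have r1 := IH1.mp (by push_cast; linarith)
          have r2 := IH2.mp (by push_cast; linarith)
          obtain ⟨hd, hsz⟩ := hAr.mp ⟨r1, r2⟩
          refine Or.inr ⟨?_, ?_⟩
          · rw [he]; exact mul_dvd_mul_left 2 hd
          · omega
        · intro h
          rcases h with h1 | ⟨h1, h2⟩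
          · exfalso
            have h2 : (2:ℕ) ∣ 2 * M + 1 :=
              dvd_trans (dvd_pow_self 2 (by omega : e ≠ 0)) h1
            omega
          · have hd : 2 ^ (e - 1) ∣ M + f + 1 := by
              rw [he] at h1
              exact (mul_dvd_mul_iff_left (two_ne_zero)).mp h1
            have hsz : 2 ^ (e - 1 + 1) ≤ M + f + 1 := by omega
            obtain ⟨r1, r2⟩ := hAr.mpr ⟨hd, hsz⟩
            have q1 := IH1.mpr r1
            have q2 := IH2.mpr r2
            push_cast at q1 q2 ⊢
            linarith

lemma pair_iff (k a m : ℕ) (hk : 1 ≤ k) (hm : 1 ≤ m)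
    (ha1 : 2 ^ (k - 1) ≤ a) (ha2 : a < 2 ^ k) :
    ((((c (2 * m + a) : ℤ) = c (m + a) + c m + a) ∧
      ((c (2 * m + a + 1) : ℤ) = c (m + a + 1) + c m + (a + 1))) ↔ 2 ^ k ∣ m) := by
  have hpk : (0:ℕ) < 2 ^ (k - 1) := pow_pos (by norm_num) (k - 1)
  have e1 : (2:ℕ) ^ k = 2 * 2 ^ (k - 1) := by rw [← pow_succ']; congr 1; omega
  have ha0 : 1 ≤ a := by omega
  obtain ⟨ea, hea1, hea2⟩ := exists_lv a ha0
  have I1 := psi_eq_iff (a + m) a m ea le_rfl hm hea1 hea2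
  have I2 := psi_eq_iff ((a + 1) + m) (a + 1) m k le_rfl hm (by omega) (by omega)
  rw [show 2 * m + (a + 1) = 2 * m + a + 1 by ring,
      show m + (a + 1) = m + a + 1 by ring] at I2
  have hAr := arith1 k a m ea hk ha1 ha2 hea1 hea2
  constructor
  · rintro ⟨h1, h2⟩
    exact hAr.mp ⟨I1.mp h1, I2.mp (by push_cast at h2 ⊢; linarith)⟩
  · intro h
    obtain ⟨r1, r2⟩ := hAr.mpr h
    refine ⟨I1.mpr r1, ?_⟩
    have := I2.mpr r2
    push_cast at this ⊢
    linarith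

/-- For an odd number `s = 2^(k+1) - (2t + 1)` with `2t < 2^k` and any `m ≥ 1`:
`c (2m + s) + c (2m) + s = c (4m + s)` holds if and only if `m = 2^k * p` for
some `p ≥ 1`. -/
theorem c_eq_odd_diff_even_iff (k t : ℕ) (ht : 2 * t < 2 ^ k) (s : ℕ)
    (hs : s = 2 ^ (k + 1) - (2 * t + 1)) (m : ℕ) (hm : 1 ≤ m) :
    c (2 * m + s) + c (2 * m) + s = c (4 * m + s) ↔
      ∃ p : ℕ, 1 ≤ p ∧ m = 2 ^ k * p := by
  rcases Nat.eq_zero_or_pos k with rfl | hk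
  · -- k = 0
    obtain rfl : t = 0 := by norm_num at ht; exact ht
    obtain rfl : s = 1 := by norm_num at hs; exact hs
    have heq : c (2 * m + 1) + c (2 * m) + 1 = c (4 * m + 1) := by
      rw [show 4 * m + 1 = 2 * (2 * m) + 1 by ring, c_odd (2 * m) (by omega)]
    constructor
    · intro _
      exact ⟨m, hm, by norm_num⟩
    · intro _
      exact heq
  · -- k ≥ 1
    have e1 : (2:ℕ) ^ k = 2 * 2 ^ (k - 1) := by rw [← pow_succ']; congr 1; omega
    have e2 : (2:ℕ) ^ (k + 1) = 2 * 2 ^ k := by rw [pow_succ]; ring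
    have hpk : (0:ℕ) < 2 ^ (k - 1) := pow_pos (by norm_num) (k - 1)
    set a := 2 ^ k - 1 - t with hadef
    have hs' : s = 2 * a + 1 := by omega
    have ha1 : 2 ^ (k - 1) ≤ a := by omega
    have ha2 : a < 2 ^ k := by omega
    subst hs'
    rw [show 2 * m + (2 * a + 1) = 2 * (m + a) + 1 by ring,
        show 4 * m + (2 * a + 1) = 2 * (2 * m + a) + 1 by ring,
        c_odd (m + a) (by omega), c_odd (2 * m + a) (by omega), c_two_mul]
    have hb1 := psi_le (a + m) a m le_rfl
    have hb2 := psi_le ((a + 1) + m) (a + 1) m le_rfl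
    rw [show 2 * m + (a + 1) = 2 * m + a + 1 by ring,
        show m + (a + 1) = m + a + 1 by ring] at hb2
    have hpair := pair_iff k a m hk hm ha1 ha2
    constructor
    · intro h
      have h' : ((c (m + a + 1) : ℤ) + c (m + a) + 1) + 2 * c m + (2 * a + 1) =
          (c (2 * m + a + 1) : ℤ) + c (2 * m + a) + 1 := by exact_mod_cast h
      have hd := hpair.mp (by
        constructor
        · push_cast at hb1 hb2 ⊢; linarith
        · push_cast at hb1 hb2 ⊢; linarith)
      obtain ⟨p, hp⟩ := hd
      refine ⟨p, ?_, hp⟩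
      rcases Nat.eq_zero_or_pos p with rfl | hp1
      · omega
      · exact hp1
    · rintro ⟨p, hp1, hp2⟩
      have hd : 2 ^ k ∣ m := ⟨p, hp2⟩
      obtain ⟨q1, q2⟩ := hpair.mpr hd
      have : ((c (m + a + 1) : ℤ) + c (m + a) + 1) + 2 * c m + (2 * a + 1) =
          (c (2 * m + a + 1) : ℤ) + c (2 * m + a) + 1 := by push_cast at q1 q2 ⊢; linarith
      exact_mod_cast this
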